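/- (Definability of classes of world-pointed models) Let P be a finite set of atomic propositions. A class C of world-pointed inquisitive modal models over P is definable in InqML (i.e., there is an InqML formula φ with C = { (M,w) : M,w ⊨ φ }) if and only if C is closed under ~^n for some n ∈ ℕ (i.e., whenever (M,w) ∈ C and M,w ~^n M',w', then (M',w') ∈ C). -/

import Mathlib

/-- Formulas of inquisitive modal logic InqML over atomic propositions `P`. -/
inductive InqForm (P : Type) : Type
  | atom : P → InqForm P
  | bot : InqForm P
  | and : InqForm P → InqForm P → InqForm P
  | impl : InqForm P → InqForm P → InqForm P
  | idisj : InqForm P → InqForm P → InqForm P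
  | box : InqForm P → InqForm P
  | boxplus : InqForm P → InqForm P

/-- An inquisitive modal model `M = ⟨W, Σ, V⟩`. -/
structure InqModel (P : Type) where
  W : Type
  Sig : W → Set (Set W)
  Sig_nonempty : ∀ w, (Sig w).Nonempty
  Sig_downward : ∀ w, ∀ s ∈ Sig w, ∀ t ⊆ s, t ∈ Sig w
  V : P → Set W

/-- `σ(w) = ⋃ Σ(w)`. -/
def InqModel.sigma {P : Type} (M : InqModel P) (w : M.W) : Set M.W :=
  ⋃₀ M.Sig w

/-- Support of a formula at an information state `s ⊆ W`. -/
def support {P : Type} (M : InqModel P) : InqForm P → Set M.W → Prop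
  | .atom p, s => s ⊆ M.V p
  | .bot, s => s = ∅
  | .and φ ψ, s => support M φ s ∧ support M ψ s
  | .impl φ ψ, s => ∀ t ⊆ s, support M φ t → support M ψ t
  | .idisj φ ψ, s => support M φ s ∨ support M ψ s
  | .box φ, s => ∀ w ∈ s, support M φ (M.sigma w)
  | .boxplus φ, s => ∀ w ∈ s, ∀ t ∈ M.Sig w, support M φ t

/-- Truth at a world: `M,w ⊨ φ` iff `M,{w} ⊨ φ`. -/
def truth {P : Type} (M : InqModel P) (w : M.W) (φ : InqForm P) : Prop :=
  support M φ {w}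

/-- Modal depth: maximal nesting depth of `□` and `⊞`. -/
def mdepth {P : Type} : InqForm P → ℕ
  | .atom _ => 0
  | .bot => 0
  | .and φ ψ => max (mdepth φ) (mdepth ψ)
  | .impl φ ψ => max (mdepth φ) (mdepth ψ)
  | .idisj φ ψ => max (mdepth φ) (mdepth ψ)
  | .box φ => mdepth φ + 1
  | .boxplus φ => mdepth φ + 1

/-- Lift of a relation between worlds to sets of worlds: every world on either
side is related to some world on the other side. -/
def StateRel {W W' : Type} (Z : W → W' → Prop) (s : Set W) (s' : Set W') : Prop :=
  (∀ w ∈ s, ∃ w' ∈ s', Z w w') ∧ (∀ w' ∈ s', ∃ w ∈ s, Z w w')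

/-- `n`-bisimilarity between worlds of two inquisitive modal models. -/
def NBisimW {P : Type} (M M' : InqModel P) : ℕ → M.W → M'.W → Prop
  | 0, w, w' => ∀ p : P, w ∈ M.V p ↔ w' ∈ M'.V p
  | n + 1, w, w' => (∀ p : P, w ∈ M.V p ↔ w' ∈ M'.V p) ∧
      (∀ s ∈ M.Sig w, ∃ s' ∈ M'.Sig w', StateRel (NBisimW M M' n) s s') ∧
      (∀ s' ∈ M'.Sig w', ∃ s ∈ M.Sig w, StateRel (NBisimW M M' n) s s')

/-- `n`-bisimilarity between information states. -/
def NBisimS {P : Type} (M M' : InqModel P) (n : ℕ) (s : Set M.W) (s' : Set M'.W) : Prop :=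
  StateRel (NBisimW M M' n) s s'

/-- `Z` is a bisimulation between two inquisitive modal models. -/
def IsBisimulation {P : Type} (M M' : InqModel P) (Z : M.W → M'.W → Prop) : Prop :=
  ∀ w w', Z w w' →
    (∀ p : P, w ∈ M.V p ↔ w' ∈ M'.V p) ∧
    (∀ s ∈ M.Sig w, ∃ s' ∈ M'.Sig w', StateRel Z s s') ∧
    (∀ s' ∈ M'.Sig w', ∃ s ∈ M.Sig w, StateRel Z s s')

/-- Bisimilarity of worlds: inclusion in some bisimulation. -/
def BisimW {P : Type} (M M' : InqModel P) (w : M.W) (w' : M'.W) : Prop :=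
  ∃ Z, IsBisimulation M M' Z ∧ Z w w'

/-- Bisimilarity of information states. -/
def BisimS {P : Type} (M M' : InqModel P) (s : Set M.W) (s' : Set M'.W) : Prop :=
  StateRel (BisimW M M') s s'


/-!
The `n`-type of a world consists of its true atoms and, for `n > 0`, the sets of `(n-1)`-types
realized by the states of its inquisitive state; `n`-bisimilarity is equality of `n`-types. States
realizing the same `n`-types support the same formulas of modal depth at most `n`, so a class
defined by `φ` is closed under `~^(mdepth φ)`. Conversely, over finitely many atoms there are
finitely many `n`-types and each coherent one has a characteristic formula, so a class closed
under `~^n` is defined by the classical disjunction of the characteristic formulas of the types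
it realizes.
-/

theorem Set.exists_subset_image_eq_image {α β γ : Type*} {f : α → γ} {g : β → γ} {s t : Set α}
    {s' : Set β} (h : f '' s = g '' s') (hts : t ⊆ s) : ∃ t' ⊆ s', f '' t = g '' t' := by
  refine ⟨s' ∩ g ⁻¹' (f '' t), Set.inter_subset_left, ?_⟩
  rw [Set.image_inter_preimage, ← h, Set.inter_eq_right.2 (Set.image_mono hts)]

theorem stateRel_iff_image_eq {α β γ : Type} {Z : α → β → Prop} {f : α → γ} {g : β → γ}
    (hZ : ∀ a b, Z a b ↔ f a = g b) (s : Set α) (s' : Set β) :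
    StateRel Z s s' ↔ f '' s = g '' s' := by
  constructor
  · rintro ⟨h, h'⟩
    apply subset_antisymm
    · rintro _ ⟨a, ha, rfl⟩
      obtain ⟨b, hb, hab⟩ := h a ha
      exact ⟨b, hb, ((hZ a b).1 hab).symm⟩
    · rintro _ ⟨b, hb, rfl⟩
      obtain ⟨a, ha, hab⟩ := h' b hb
      exact ⟨a, ha, (hZ a b).1 hab⟩
  · intro h
    constructor
    · intro a ha
      obtain ⟨b, hb, hba⟩ : f a ∈ g '' s' := h ▸ Set.mem_image_of_mem f ha
      exact ⟨b, hb, (hZ a b).2 hba.symm⟩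
    · intro b hb
      obtain ⟨a, ha, hab⟩ : g b ∈ f '' s := h.symm ▸ Set.mem_image_of_mem g hb
      exact ⟨a, ha, (hZ a b).2 hab⟩

section

variable {P : Type} {M : InqModel P}

theorem InqModel.empty_mem_Sig (M : InqModel P) (w : M.W) : ∅ ∈ M.Sig w := by
  obtain ⟨s, hs⟩ := M.Sig_nonempty w
  exact M.Sig_downward w s hs ∅ (Set.empty_subset s)

theorem support_mono {φ : InqForm P} {s t : Set M.W} (h : support M φ s) (hts : t ⊆ s) :
    support M φ t := by
  induction φ generalizing s t with
  | atom p => exact hts.trans h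
  | bot => exact Set.subset_eq_empty hts h
  | and φ ψ ihφ ihψ => exact ⟨ihφ h.1 hts, ihψ h.2 hts⟩
  | impl φ ψ _ _ => exact fun u hu => h u (hu.trans hts)
  | idisj φ ψ ihφ ihψ => exact h.imp (ihφ · hts) (ihψ · hts)
  | box φ _ => exact fun w hw => h w (hts hw)
  | boxplus φ _ => exact fun w hw => h w (hts hw)

end

namespace InqForm

variable {P : Type} {ι : Type} [Finite ι]

def neg (φ : InqForm P) : InqForm P := φ.impl .bot

noncomputable def iConj (S : Set ι) (f : ι → InqForm P) : InqForm P :=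
  ((Set.toFinite S).toFinset.toList.map f).foldr .and bot.neg

noncomputable def iInqDisj (S : Set ι) (f : ι → InqForm P) : InqForm P :=
  ((Set.toFinite S).toFinset.toList.map f).foldr .idisj .bot

noncomputable def iClassicalDisj (S : Set ι) (f : ι → InqForm P) : InqForm P :=
  (iConj S fun i => (f i).neg).neg

end InqForm

section

open InqForm

variable {P : Type} {M : InqModel P} {ι : Type} [Finite ι]

theorem support_neg {φ : InqForm P} {s : Set M.W} :
    support M φ.neg s ↔ ∀ w ∈ s, ¬ truth M w φ := by
  constructor
  · intro h w hw hφ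
    exact Set.singleton_ne_empty w (h {w} (Set.singleton_subset_iff.2 hw) hφ)
  · intro h t hts hφ
    by_contra hne
    obtain ⟨w, hw⟩ := Set.nonempty_iff_ne_empty.2 hne
    exact h w (hts hw) (support_mono hφ (Set.singleton_subset_iff.2 hw))

theorem truth_neg {φ : InqForm P} {w : M.W} : truth M w φ.neg ↔ ¬ truth M w φ := by
  simp [truth, support_neg]

theorem truth_and {φ ψ : InqForm P} {w : M.W} :
    truth M w (φ.and ψ) ↔ truth M w φ ∧ truth M w ψ := Iff.rfl

theorem truth_atom {p : P} {w : M.W} : truth M w (.atom p) ↔ w ∈ M.V p :=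
  Set.singleton_subset_iff

theorem truth_boxplus {φ : InqForm P} {w : M.W} :
    truth M w φ.boxplus ↔ ∀ t ∈ M.Sig w, support M φ t := by
  simp [truth, support]

theorem support_foldr_and (l : List (InqForm P)) {s : Set M.W} :
    support M (l.foldr .and bot.neg) s ↔ ∀ φ ∈ l, support M φ s := by
  induction l with
  | nil => simp [support_neg, truth, support]
  | cons φ l ih => simp [support, ih]

theorem support_foldr_idisj (l : List (InqForm P)) {s : Set M.W} :
    support M (l.foldr .idisj .bot) s ↔ s = ∅ ∨ ∃ φ ∈ l, support M φ s := by
  induction l with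
  | nil => simp [support]
  | cons φ l ih =>
    simp only [List.foldr_cons, support, ih, List.mem_cons, exists_eq_or_imp]
    tauto

theorem support_iConj {S : Set ι} {f : ι → InqForm P} {s : Set M.W} :
    support M (iConj S f) s ↔ ∀ i ∈ S, support M (f i) s := by
  simp [iConj, support_foldr_and]

theorem truth_iConj {S : Set ι} {f : ι → InqForm P} {w : M.W} :
    truth M w (iConj S f) ↔ ∀ i ∈ S, truth M w (f i) :=
  support_iConj

theorem support_iInqDisj {S : Set ι} {f : ι → InqForm P} {s : Set M.W} :
    support M (iInqDisj S f) s ↔ s = ∅ ∨ ∃ i ∈ S, support M (f i) s := by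
  simp [iInqDisj, support_foldr_idisj]

theorem support_iClassicalDisj {S : Set ι} {f : ι → InqForm P} {s : Set M.W} :
    support M (iClassicalDisj S f) s ↔ ∀ w ∈ s, ∃ i ∈ S, truth M w (f i) := by
  simp [iClassicalDisj, support_neg, truth_iConj, truth_neg]

theorem truth_iClassicalDisj {S : Set ι} {f : ι → InqForm P} {w : M.W} :
    truth M w (iClassicalDisj S f) ↔ ∃ i ∈ S, truth M w (f i) := by
  simp [truth, support_iClassicalDisj]

end

def NType (P : Type) : ℕ → Type
  | 0 => Set P
  | n + 1 => Set P × Set (Set (NType P n))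

namespace NType

variable {P : Type}

instance finite [Finite P] : ∀ n, Finite (NType P n)
  | 0 => inferInstanceAs (Finite (Set P))
  | n + 1 => by
    have := finite n
    exact inferInstanceAs (Finite (Set P × Set (Set (NType P n))))

def atoms : {n : ℕ} → NType P n → Set P
  | 0, α => α
  | _ + 1, τ => τ.1

/-- The closure properties shared by all realized types. -/
def IsCoherent : {n : ℕ} → NType P n → Prop
  | 0, _ => True
  | _ + 1, τ => ∅ ∈ τ.2 ∧ (∀ S ∈ τ.2, ∀ S' ⊆ S, S' ∈ τ.2) ∧ ∀ S ∈ τ.2, ∀ τ' ∈ S, IsCoherent τ'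

end NType

namespace InqModel

variable {P : Type} (M : InqModel P)

def ntype : (n : ℕ) → M.W → NType P n
  | 0, w => {p | w ∈ M.V p}
  | n + 1, w => ({p | w ∈ M.V p}, (ntype n '' ·) '' M.Sig w)

variable {M}

theorem atoms_ntype (n : ℕ) (w : M.W) : (M.ntype n w).atoms = {p | w ∈ M.V p} := by
  cases n <;> rfl

theorem image_ntype_mem_of_subset {n : ℕ} {w : M.W} {t : Set M.W} (ht : t ∈ M.Sig w)
    {S : Set (NType P n)} (hS : S ⊆ M.ntype n '' t) : S ∈ (M.ntype (n + 1) w).2 := by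
  refine ⟨t ∩ M.ntype n ⁻¹' S, M.Sig_downward w t ht _ Set.inter_subset_left, ?_⟩
  show M.ntype n '' _ = S
  rw [Set.image_inter_preimage, Set.inter_eq_right.2 hS]

theorem isCoherent_ntype : ∀ (n : ℕ) (w : M.W), (M.ntype n w).IsCoherent
  | 0, _ => trivial
  | n + 1, w => by
    refine ⟨⟨∅, M.empty_mem_Sig w, Set.image_empty _⟩, ?_, ?_⟩
    · rintro _ ⟨t, ht, rfl⟩ S' hS'
      exact image_ntype_mem_of_subset ht hS'
    · rintro _ ⟨t, -, rfl⟩ _ ⟨u, -, rfl⟩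
      exact isCoherent_ntype n u

theorem image_ntype_sigma (n : ℕ) (w : M.W) :
    M.ntype n '' M.sigma w = ⋃₀ (M.ntype (n + 1) w).2 := by
  rw [sigma, Set.image_sUnion]
  rfl

theorem ntype_succ_eq_iff {n : ℕ} {τ : NType P (n + 1)} (hτ : τ.IsCoherent) (w : M.W) :
    M.ntype (n + 1) w = τ ↔ {p | w ∈ M.V p} = τ.1 ∧
      (∀ t ∈ M.Sig w, ∃ S ∈ τ.2, M.ntype n '' t ⊆ S) ∧
      ∀ S ∈ τ.2, S.Nonempty → ∃ t ∈ M.Sig w, S ⊆ M.ntype n '' t := by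
  obtain ⟨-, hdown, -⟩ := hτ
  refine (Prod.ext_iff (x := M.ntype (n + 1) w) (y := τ)).trans
    (and_congr_right fun _ => ⟨fun h => ⟨fun t ht => ?_, fun S hS _ => ?_⟩, ?_⟩)
  · exact ⟨_, h ▸ image_ntype_mem_of_subset ht subset_rfl, subset_rfl⟩
  · rw [← h] at hS
    obtain ⟨t, ht, rfl⟩ := hS
    exact ⟨t, ht, subset_rfl⟩
  · rintro ⟨hsub, hsup⟩
    apply subset_antisymm
    · rintro _ ⟨t, ht, rfl⟩
      obtain ⟨S, hS, htS⟩ := hsub t ht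
      exact hdown S hS _ htS
    · intro S hS
      rcases S.eq_empty_or_nonempty with rfl | hne
      · exact ⟨∅, M.empty_mem_Sig w, Set.image_empty _⟩
      · obtain ⟨t, ht, hSt⟩ := hsup S hS hne
        exact image_ntype_mem_of_subset ht hSt

end InqModel

section

variable {P : Type}

open InqModel

theorem nbisimW_iff_ntype_eq {M M' : InqModel P} :
    ∀ (n : ℕ) (w : M.W) (w' : M'.W), NBisimW M M' n w w' ↔ M.ntype n w = M'.ntype n w'
  | 0, w, w' => Set.ext_iff.symm
  | n + 1, w, w' => by
    have hstates := stateRel_iff_image_eq (nbisimW_iff_ntype_eq (M := M) (M' := M') n)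
    have hSig := stateRel_iff_image_eq (fun t t' => hstates t t') (M.Sig w) (M'.Sig w')
    exact (and_congr Set.ext_iff.symm hSig).trans
      (Prod.ext_iff (x := M.ntype (n + 1) w) (y := M'.ntype (n + 1) w')).symm

theorem support_of_image_ntype_eq {φ : InqForm P} {n : ℕ} (hφ : mdepth φ ≤ n)
    {M M' : InqModel P} {s : Set M.W} {s' : Set M'.W} (h : M.ntype n '' s = M'.ntype n '' s')
    (hs : support M φ s) : support M' φ s' := by
  induction φ generalizing n M M' s s' with
  | atom p =>
    intro u' hu'
    obtain ⟨u, hu, hu'u⟩ : M'.ntype n u' ∈ M.ntype n '' s := h ▸ Set.mem_image_of_mem _ hu'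
    have := congrArg NType.atoms hu'u
    rw [atoms_ntype, atoms_ntype] at this
    exact (Set.ext_iff.1 this p).1 (hs hu)
  | bot =>
    change s = ∅ at hs
    change s' = ∅
    rw [← Set.image_eq_empty (f := M'.ntype n), ← h, hs, Set.image_empty]
  | and φ ψ ihφ ihψ =>
    rw [mdepth, max_le_iff] at hφ
    exact ⟨ihφ hφ.1 h hs.1, ihψ hφ.2 h hs.2⟩
  | idisj φ ψ ihφ ihψ =>
    rw [mdepth, max_le_iff] at hφ
    exact hs.imp (ihφ hφ.1 h) (ihψ hφ.2 h)
  | impl φ ψ ihφ ihψ =>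
    rw [mdepth, max_le_iff] at hφ
    intro t' ht' hφt'
    obtain ⟨t, hts, htt'⟩ := Set.exists_subset_image_eq_image h.symm ht'
    exact ihψ hφ.2 htt'.symm (hs t hts (ihφ hφ.1 htt' hφt'))
  | box φ ih =>
    obtain _ | m := n
    · simp [mdepth] at hφ
    intro w' hw'
    obtain ⟨w, hw, hww'⟩ : M'.ntype (m + 1) w' ∈ M.ntype (m + 1) '' s :=
      h ▸ Set.mem_image_of_mem _ hw'
    refine ih (Nat.le_of_succ_le_succ hφ) ?_ (hs w hw)
    rw [image_ntype_sigma, image_ntype_sigma, hww']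
  | boxplus φ ih =>
    obtain _ | m := n
    · simp [mdepth] at hφ
    intro w' hw' t' ht'
    obtain ⟨w, hw, hww'⟩ : M'.ntype (m + 1) w' ∈ M.ntype (m + 1) '' s :=
      h ▸ Set.mem_image_of_mem _ hw'
    obtain ⟨t, ht, htt'⟩ : M'.ntype m '' t' ∈ (M.ntype (m + 1) w).2 :=
      hww' ▸ Set.mem_image_of_mem _ ht'
    exact ih (Nat.le_of_succ_le_succ hφ) htt' (hs w hw t ht)

theorem truth_of_nbisimW {φ : InqForm P} {n : ℕ} (hφ : mdepth φ ≤ n) {M M' : InqModel P}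
    {w : M.W} {w' : M'.W} (h : NBisimW M M' n w w') (hw : truth M w φ) : truth M' w' φ :=
  support_of_image_ntype_eq hφ (by simp [(nbisimW_iff_ntype_eq n w w').1 h]) hw

end

namespace NType

open InqForm InqModel

variable {P : Type} [Finite P] {n : ℕ}

noncomputable def atomsForm (α : Set P) : InqForm P :=
  (iConj α .atom).and (iConj αᶜ fun p => (InqForm.atom p).neg)

noncomputable def typesIn (χ : NType P n → InqForm P) (S : Set (NType P n)) : InqForm P :=
  iClassicalDisj {τ | τ ∈ S ∧ τ.IsCoherent} χ

/-- The second conjunct says that every state of `Σ(w)` realizes only types from one member of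
`τ.2`; the third, that for every nonempty `S ∈ τ.2` some state of `Σ(w)` avoids none of the types
in `S`. -/
noncomputable def charForm : (n : ℕ) → NType P n → InqForm P
  | 0, α => atomsForm α
  | n + 1, τ => (atomsForm τ.1).and <| (iInqDisj τ.2 (typesIn (charForm n))).boxplus.and <|
      iConj {S | S ∈ τ.2 ∧ S.Nonempty} fun S =>
        (iInqDisj S fun τ' => typesIn (charForm n) {τ'}ᶜ).boxplus.neg

theorem truth_atomsForm {α : Set P} {M : InqModel P} {w : M.W} :
    truth M w (atomsForm α) ↔ {p | w ∈ M.V p} = α := by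
  simp only [atomsForm, truth_and, truth_iConj, truth_neg, truth_atom, Set.ext_iff,
    Set.mem_compl_iff]
  constructor
  · rintro ⟨hin, hout⟩ p
    exact ⟨fun hp => by_contra fun hpα => hout p hpα hp, hin p⟩
  · intro h
    exact ⟨fun p => (h p).2, fun p hpα hp => hpα ((h p).1 hp)⟩

section typesIn

variable {χ : NType P n → InqForm P}
  (hχ : ∀ τ : NType P n, τ.IsCoherent → ∀ (M : InqModel P) (w : M.W),
    truth M w (χ τ) ↔ M.ntype n w = τ)
include hχ

theorem support_typesIn {S : Set (NType P n)} {M : InqModel P} {t : Set M.W} :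
    support M (typesIn χ S) t ↔ M.ntype n '' t ⊆ S := by
  rw [typesIn, support_iClassicalDisj, Set.image_subset_iff]
  refine forall₂_congr fun u _ => ⟨?_, fun hu => ?_⟩
  · rintro ⟨τ, ⟨hτS, hτ⟩, hu⟩
    rwa [Set.mem_preimage, (hχ τ hτ M u).1 hu]
  · exact ⟨_, ⟨hu, isCoherent_ntype n u⟩, (hχ _ (isCoherent_ntype n u) M u).2 rfl⟩

theorem support_iInqDisj_typesIn {T : Set (Set (NType P n))} (hT : ∅ ∈ T) {M : InqModel P}
    {t : Set M.W} : support M (iInqDisj T (typesIn χ)) t ↔ ∃ S ∈ T, M.ntype n '' t ⊆ S := by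
  simp only [support_iInqDisj, support_typesIn hχ]
  refine ⟨?_, Or.inr⟩
  rintro (rfl | h)
  · exact ⟨∅, hT, by simp⟩
  · exact h

theorem truth_neg_boxplus_typesIn_compl {S : Set (NType P n)} (hS : S.Nonempty)
    {M : InqModel P} {w : M.W} :
    truth M w (iInqDisj S fun τ' => typesIn χ {τ'}ᶜ).boxplus.neg ↔
      ∃ t ∈ M.Sig w, S ⊆ M.ntype n '' t := by
  simp only [truth_neg, truth_boxplus, support_iInqDisj, support_typesIn hχ,
    Set.subset_compl_singleton_iff, not_forall, not_or, not_exists, not_and, not_not, exists_prop]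
  refine exists_congr fun t => and_congr_right fun _ => ⟨fun h => h.2, fun h => ⟨?_, h⟩⟩
  rintro rfl
  obtain ⟨τ, hτ⟩ := hS
  simpa using h hτ

end typesIn

theorem truth_charForm : ∀ {n : ℕ} (τ : NType P n), τ.IsCoherent →
    ∀ (M : InqModel P) (w : M.W), truth M w (charForm n τ) ↔ M.ntype n w = τ
  | 0, _, _, _, _ => truth_atomsForm
  | n + 1, τ, hτ, M, w => by
    have hχ := truth_charForm (n := n)
    have hrealize : (∀ S ∈ {S | S ∈ τ.2 ∧ S.Nonempty},
        truth M w (iInqDisj S fun τ' => typesIn (charForm n) {τ'}ᶜ).boxplus.neg) ↔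
        ∀ S ∈ τ.2, S.Nonempty → ∃ t ∈ M.Sig w, S ⊆ M.ntype n '' t :=
      ⟨fun h S hS hne => (truth_neg_boxplus_typesIn_compl hχ hne).1 (h S ⟨hS, hne⟩),
        fun h S ⟨hS, hne⟩ => (truth_neg_boxplus_typesIn_compl hχ hne).2 (h S hS hne)⟩
    rw [ntype_succ_eq_iff hτ, charForm, truth_and, truth_and, truth_atomsForm, truth_boxplus,
      truth_iConj, hrealize]
    simp only [support_iInqDisj_typesIn hχ hτ.1]

end NType

/-- **Definability of classes of world-pointed models**: over a finite set of
atomic propositions, a class of world-pointed inquisitive modal models is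
definable in InqML iff it is closed under `~^n` for some `n`. -/
theorem definability_world_classes {P : Type} [Finite P]
    (C : (M : InqModel P) → M.W → Prop) :
    (∃ φ : InqForm P, ∀ (M : InqModel P) (w : M.W), C M w ↔ truth M w φ) ↔
    (∃ n : ℕ, ∀ (M M' : InqModel P) (w : M.W) (w' : M'.W),
      C M w → NBisimW M M' n w w' → C M' w') := by
  constructor
  · rintro ⟨φ, hφ⟩
    exact ⟨mdepth φ, fun M M' w w' hC h => (hφ M' w').2 (truth_of_nbisimW le_rfl h ((hφ M w).1 hC))⟩
  · rintro ⟨n, hclosed⟩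
    let realized : Set (NType P n) := {τ | ∃ (M : InqModel P) (w : M.W), C M w ∧ M.ntype n w = τ}
    refine ⟨InqForm.iClassicalDisj realized (NType.charForm n), fun M w => ?_⟩
    rw [truth_iClassicalDisj]
    constructor
    · intro hC
      exact ⟨_, ⟨M, w, hC, rfl⟩, (NType.truth_charForm _ (M.isCoherent_ntype n w) M w).2 rfl⟩
    · rintro ⟨_, ⟨M₀, w₀, hC₀, rfl⟩, hw⟩
      have hw₀ := (NType.truth_charForm _ (M₀.isCoherent_ntype n w₀) M w).1 hw
      exact hclosed M₀ M w₀ w hC₀ ((nbisimW_iff_ntype_eq n w₀ w).2 hw₀.symm)
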